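/- arXiv:2311.02467 — 4 statements merged into one kernel-verified Lean document; each statement's English description precedes it below -/
import Mathlib

section
/- Lemma C.1 (explicit inverse of the interaction second-moment matrix, polynomial case). For every m ≥ 1, every 1 ≤ β ≤ m, and every e ∈ (0,1)^m, the matrix Σ_β(e) is invertible and its inverse is T_β(e); that is, Σ_β(e)·T_β(e) = T_β(e)·Σ_β(e) = I. -/
open Finset

/-- The index set `I_β`: subsets of `{1,…,m}` of cardinality at most `β`
(including the empty set). -/
def IdxSet (m β : ℕ) : Type := {S : Finset (Fin m) // S.card ≤ β}

instance (m β : ℕ) : Fintype (IdxSet m β) := Subtype.fintype _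
instance (m β : ℕ) : DecidableEq (IdxSet m β) := Subtype.instDecidableEq

/-- The interaction second-moment matrix `Σ_β(e)` with entries
`Σ_β(e)_{J,K} = ∏_{j ∈ J∪K} e_j`. -/
noncomputable def SigmaB (m β : ℕ) (e : Fin m → ℝ) :
    Matrix (IdxSet m β) (IdxSet m β) ℝ :=
  Matrix.of fun J K => ∏ j ∈ (J.1 ∪ K.1), e j

/-- The explicit candidate inverse `T_β(e)` with entries
`T_β(e)_{J,K} = ∏_{j∈J}(−1/e_j) ⋅ ∏_{k∈K}(−1/e_k) ⋅
Σ_{U ∈ I_β, J∪K ⊆ U} ∏_{ℓ∈U} e_ℓ/(1−e_ℓ)`. -/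
noncomputable def TB (m β : ℕ) (e : Fin m → ℝ) :
    Matrix (IdxSet m β) (IdxSet m β) ℝ :=
  Matrix.of fun J K =>
    (∏ j ∈ J.1, (-1 / e j)) * (∏ k ∈ K.1, (-1 / e k)) *
      ∑ U : IdxSet m β, if J.1 ∪ K.1 ⊆ U.1 then ∏ ℓ ∈ U.1, e ℓ / (1 - e ℓ) else 0

/-!
Write `Z` for the inclusion matrix `Z_{J,U} = [U ⊆ J]` on `I_β`, `D_f` for the diagonal matrix
with entries `∏_{j ∈ J} f_j`, and `S = D_{-1}`. Expanding
`∏_{j ∈ J ∩ K} 1/e_j = ∏_{j ∈ J ∩ K} (1 + (1 - e_j)/e_j)` as a sum over subsets gives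
`Σ = D_e Z D_{(1-e)/e} Zᵀ D_e`, while `T = D_{-1/e} Zᵀ D_{e/(1-e)} Z D_{-1/e}` by definition.
Because `I_β` is closed under taking subsets, Möbius inversion on the Boolean lattice yields
`Z S Z = S`, i.e. `Z⁻¹ = S Z S`. As diagonal matrices commute, the product `Σ T` then
collapses to `D_e S D_{-1/e} = 1`.
-/

open Matrix

theorem Finset.sum_Icc_neg_one_pow_card {α R : Type*} [DecidableEq α] [CommRing R]
    (s t : Finset α) :
    ∑ u ∈ Icc s t, (-1 : R) ^ #u = if s = t then (-1) ^ #s else 0 := by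
  by_cases hst : s ⊆ t
  · have hdisj : ∀ v ∈ (t \ s).powerset, Disjoint s v := fun v hv =>
      disjoint_sdiff.mono_right (mem_powerset.1 hv)
    have halt := congrArg (Int.cast : ℤ → R) (sum_powerset_neg_one_pow_card (x := t \ s))
    push_cast at halt
    rw [Icc_eq_image_powerset hst, sum_image, sum_congr rfl fun v hv => by
      rw [card_union_of_disjoint (hdisj v hv), pow_add], ← mul_sum, halt]
    · have : t \ s = ∅ ↔ s = t := by
        rw [sdiff_eq_empty_iff_subset, subset_antisymm_iff, and_iff_right hst]
      simp only [this, mul_ite, mul_one, mul_zero]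
    · intro u hu v hv huv
      rw [← union_sdiff_cancel_left (hdisj u hu), ← union_sdiff_cancel_left (hdisj v hv)]
      exact congrArg (· \ s) huv
  · rw [Icc_eq_empty hst, sum_empty, if_neg (fun h => hst h.le)]

namespace IdxSet

variable {m β : ℕ} {R : Type*}

lemma sum_ite_subset [AddCommMonoid R] {s : Finset (Fin m)} (hs : #s ≤ β)
    (f : Finset (Fin m) → R) :
    ∑ U : IdxSet m β, (if U.1 ⊆ s then f U.1 else 0) = ∑ U ∈ s.powerset, f U := by
  change ∑ U : {U : Finset (Fin m) // #U ≤ β}, _ = _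
  rw [← Finset.sum_subtype {U | #U ≤ β} (by simp) (fun U => if U ⊆ s then f U else 0),
    ← sum_filter]
  congr 1
  ext U
  simp only [mem_filter, mem_univ, true_and, mem_powerset]
  exact ⟨And.right, fun h => ⟨(card_le_card h).trans hs, h⟩⟩

variable (R) in
def zeta [Zero R] [One R] : Matrix (IdxSet m β) (IdxSet m β) R :=
  of fun J U => if U.1 ⊆ J.1 then 1 else 0

def prodDiagonal [CommSemiring R] (f : Fin m → R) : Matrix (IdxSet m β) (IdxSet m β) R :=
  diagonal fun J => ∏ j ∈ J.1, f j

section CommSemiring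
variable [CommSemiring R]

lemma prodDiagonal_mul_prodDiagonal (f g : Fin m → R) :
    (prodDiagonal f * prodDiagonal g : Matrix (IdxSet m β) _ R) =
      prodDiagonal fun j => f j * g j := by
  simp [prodDiagonal, prod_mul_distrib]

lemma prodDiagonal_one : (prodDiagonal fun _ => 1 : Matrix (IdxSet m β) _ R) = 1 := by
  simp [prodDiagonal]

@[simp]
lemma transpose_prodDiagonal (f : Fin m → R) :
    (prodDiagonal f : Matrix (IdxSet m β) _ R)ᵀ = prodDiagonal f :=
  diagonal_transpose _

lemma zeta_mul_diagonal_mul_zeta_transpose_apply (d : IdxSet m β → R) (J K : IdxSet m β) :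
    (zeta R * diagonal d * (zeta R)ᵀ : Matrix (IdxSet m β) _ R) J K =
      ∑ U, if U.1 ⊆ J.1 ∩ K.1 then d U else 0 := by
  rw [mul_apply]
  simp [zeta, mul_diagonal, subset_inter_iff, ← ite_and, and_comm]

lemma zeta_transpose_mul_diagonal_mul_zeta_apply (d : IdxSet m β → R) (J K : IdxSet m β) :
    ((zeta R)ᵀ * diagonal d * zeta R : Matrix (IdxSet m β) _ R) J K =
      ∑ U, if J.1 ∪ K.1 ⊆ U.1 then d U else 0 := by
  rw [mul_apply]
  simp [zeta, mul_diagonal, union_subset_iff, ← ite_and, and_comm]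

lemma zeta_mul_diagonal_mul_zeta_apply (d : IdxSet m β → R) (J K : IdxSet m β) :
    (zeta R * diagonal d * zeta R : Matrix (IdxSet m β) _ R) J K =
      ∑ U, if U.1 ⊆ J.1 then (if K.1 ⊆ U.1 then d U else 0) else 0 := by
  rw [mul_apply]
  simp [zeta, mul_diagonal, ← ite_and, and_comm]

end CommSemiring

lemma zeta_mul_sign_mul_zeta [CommRing R] :
    zeta R * prodDiagonal (fun _ => -1) * zeta R =
      (prodDiagonal fun _ => -1 : Matrix (IdxSet m β) _ R) := by
  ext J K
  rw [prodDiagonal, zeta_mul_diagonal_mul_zeta_apply,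
    sum_ite_subset J.2 fun U => if K.1 ⊆ U then ∏ _ ∈ U, (-1 : R) else 0, ← sum_filter,
    ← Icc_eq_filter_powerset]
  simp only [prod_const, sum_Icc_neg_one_pow_card, diagonal_apply]
  obtain rfl | hJK := eq_or_ne J K
  · simp
  · rw [if_neg hJK, if_neg fun h => hJK (Subtype.ext h.symm)]

lemma zeta_transpose_mul_sign_mul_zeta_transpose [CommRing R] :
    (zeta R)ᵀ * prodDiagonal (fun _ => -1) * (zeta R)ᵀ =
      (prodDiagonal fun _ => -1 : Matrix (IdxSet m β) _ R) := by
  simpa only [transpose_mul, transpose_prodDiagonal, mul_assoc] using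
    congrArg transpose (zeta_mul_sign_mul_zeta (R := R) (m := m) (β := β))

end IdxSet

open IdxSet

variable {m β : ℕ} {e : Fin m → ℝ}

lemma sigmaB_eq_prodDiagonal_mul (he : ∀ j, e j ≠ 0) :
    SigmaB m β e = prodDiagonal e *
      (zeta ℝ * prodDiagonal (fun j => (1 - e j) / e j) * (zeta ℝ)ᵀ) * prodDiagonal e := by
  ext J K
  have hJK : #(J.1 ∩ K.1) ≤ β := (card_le_card inter_subset_left).trans J.2
  have hinv : ∀ j, (1 - e j) / e j + 1 = (e j)⁻¹ := fun j => by
    rw [div_add_one (he j), sub_add_cancel, one_div]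
  simp only [prodDiagonal]
  rw [mul_diagonal, diagonal_mul,
    zeta_mul_diagonal_mul_zeta_transpose_apply,
    sum_ite_subset hJK fun U => ∏ j ∈ U, (1 - e j) / e j, ← prod_add_one]
  simp only [hinv, prod_inv_distrib, SigmaB, of_apply]
  have hne : ∏ j ∈ J.1 ∩ K.1, e j ≠ 0 := prod_ne_zero_iff.2 fun j _ => he j
  field_simp
  exact prod_union_inter

lemma TB_eq_prodDiagonal_mul :
    TB m β e = prodDiagonal (fun j => -1 / e j) *
      ((zeta ℝ)ᵀ * prodDiagonal (fun j => e j / (1 - e j)) * zeta ℝ) *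
        prodDiagonal (fun j => -1 / e j) := by
  ext J K
  simp only [prodDiagonal]
  rw [mul_diagonal, diagonal_mul, zeta_transpose_mul_diagonal_mul_zeta_apply, TB, of_apply]
  ring

lemma sigmaB_mul_TB (he₀ : ∀ j, e j ≠ 0) (he₁ : ∀ j, 1 - e j ≠ 0) :
    SigmaB m β e * TB m β e = 1 := by
  rw [sigmaB_eq_prodDiagonal_mul he₀, TB_eq_prodDiagonal_mul]
  set Z : Matrix (IdxSet m β) (IdxSet m β) ℝ := zeta ℝ
  set S : Matrix (IdxSet m β) (IdxSet m β) ℝ := prodDiagonal fun _ => -1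
  set D : Matrix (IdxSet m β) (IdxSet m β) ℝ := prodDiagonal e
  set D' : Matrix (IdxSet m β) (IdxSet m β) ℝ := prodDiagonal fun j => -1 / e j
  set L : Matrix (IdxSet m β) (IdxSet m β) ℝ := prodDiagonal fun j => (1 - e j) / e j
  set L' : Matrix (IdxSet m β) (IdxSet m β) ℝ := prodDiagonal fun j => e j / (1 - e j)
  have hZSZ : Z * S * Z = S := zeta_mul_sign_mul_zeta
  have hZSZ' : Zᵀ * S * Zᵀ = S := zeta_transpose_mul_sign_mul_zeta_transpose
  have hDD' : D * D' = S := by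
    rw [prodDiagonal_mul_prodDiagonal]
    exact congrArg prodDiagonal (funext fun j => by field_simp [he₀ j])
  have hLSL' : L * S * L' = S := by
    rw [prodDiagonal_mul_prodDiagonal, prodDiagonal_mul_prodDiagonal]
    exact congrArg prodDiagonal (funext fun j => by field_simp [he₀ j, he₁ j])
  have hDSD' : D * S * D' = 1 := by
    rw [prodDiagonal_mul_prodDiagonal, prodDiagonal_mul_prodDiagonal, ← prodDiagonal_one]
    exact congrArg prodDiagonal (funext fun j => by field_simp [he₀ j])
  calc _ = D * Z * L * (Zᵀ * (D * D') * Zᵀ) * L' * Z * D' := by simp only [mul_assoc]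
    _ = D * Z * (L * S * L') * Z * D' := by rw [hDD', hZSZ']; simp only [mul_assoc]
    _ = D * (Z * S * Z) * D' := by rw [hLSL']; simp only [mul_assoc]
    _ = 1 := by rw [hZSZ, hDSD']

theorem sigmaB_inverse_general
    (m β : ℕ)
    (e : Fin m → ℝ) (he : ∀ j, 0 < e j ∧ e j < 1) :
    SigmaB m β e * TB m β e = 1 ∧ TB m β e * SigmaB m β e = 1 := by
  have h := sigmaB_mul_TB (β := β) (fun j => (he j).1.ne') fun j => (sub_pos.2 (he j).2).ne'
  exact ⟨h, mul_eq_one_comm.mp h⟩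

/-- **Lemma C.1: explicit inverse of the interaction second-moment matrix (polynomial case).**
For every `m ≥ 1`, `1 ≤ β ≤ m` and `e ∈ (0,1)^m`, the matrix `Σ_β(e)` is invertible with
inverse `T_β(e)`. -/
theorem sigmaB_inverse
    (m β : ℕ) (hm : 1 ≤ m) (hβ₁ : 1 ≤ β) (hβ₂ : β ≤ m)
    (e : Fin m → ℝ) (he : ∀ j, 0 < e j ∧ e j < 1) :
    SigmaB m β e * TB m β e = 1 ∧ TB m β e * SigmaB m β e = 1 :=
  sigmaB_inverse_general m β e he
end

section
/- Appendix C weight identity (explicit form of the polynomial additive IPW weight). For every m ≥ 1, every 1 ≤ β ≤ m, every e ∈ (0,1)^m, and all a, p ∈ {0,1}^m, one has φ_β(p)^T T_β(e) φ_β(a) = Σ_{U ∈ I_β} ∏_{ℓ∈U} ( 1{a_ℓ = p_ℓ}/e_ℓ(p_ℓ) − 1 ). -/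
/-!
Write `c_p j = -[p_j]/e_j`, `c_a j = -[a_j]/e_j` and `w U = ∏_{ℓ∈U} e_ℓ/(1-e_ℓ)`. Absorbing the
feature vectors into the two outer products of `T_β(e)`, the quadratic form becomes
`Σ_U w U (Σ_{J⊆U} ∏_J c_p)(Σ_{K⊆U} ∏_K c_a)` with `J, K` ranging over `I_β`. As `I_β` is closed
under taking subsets, the inner sums run over all subsets of `U` and factor as `∏_U (1 + c_p)` and
`∏_U (1 + c_a)`, so the claim reduces to the one-coordinate identity
`(1 - [p]/e)(1 - [a]/e) e/(1-e) = [a = p]/e(p) - 1`.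
-/

open Finset

/-- For `e ∈ (0,1)` and a binary value `a`, `eOf e a = e` if `a = 1` (`true`) and
`eOf e a = 1 − e` if `a = 0` (`false`). -/
noncomputable def eOf (e : ℝ) (a : Bool) : ℝ := if a then e else 1 - e

/-- The interaction feature vector `φ_β(a)` with entries `φ_β(a)_S = ∏_{j∈S} a_j`. -/
noncomputable def phiB (m β : ℕ) (a : Fin m → Bool) : IdxSet m β → ℝ :=
  fun S => ∏ j ∈ S.1, (if a j then (1 : ℝ) else 0)

theorem sum_sum_mul_sum_union_subset {ι α R : Type*} [Fintype ι] [DecidableEq α]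
    [CommSemiring R] (S : ι → Finset α) (x y w : ι → R) :
    ∑ J, ∑ K, x J * y K * ∑ U, (if S J ∪ S K ⊆ S U then w U else 0)
      = ∑ U, (∑ J, if S J ⊆ S U then x J else 0) * (∑ K, if S K ⊆ S U then y K else 0) * w U := by
  calc _ = ∑ J, ∑ U, ∑ K, if S J ⊆ S U ∧ S K ⊆ S U then x J * y K * w U else 0 := by
        simp_rw [union_subset_iff, mul_sum, mul_ite, mul_zero]
        exact sum_congr rfl fun J _ => sum_comm
    _ = _ := by
        rw [sum_comm]
        refine sum_congr rfl fun U _ => ?_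
        simp only [sum_mul_sum, ite_zero_mul_ite_zero]
        simp only [sum_mul, ite_mul, zero_mul]

theorem IdxSet.sum_ite_subset_prod {R : Type*} [CommSemiring R] {m β : ℕ}
    (U : IdxSet m β) (c : Fin m → R) :
    ∑ J : IdxSet m β, (if J.1 ⊆ U.1 then ∏ j ∈ J.1, c j else 0) = ∏ j ∈ U.1, (1 + c j) := by
  rw [prod_one_add, ← sum_filter]
  exact sum_bij' (fun J _ => J.1)
    (fun S hS => ⟨S, (card_le_card (mem_powerset.1 hS)).trans U.2⟩)
    (fun J hJ => mem_powerset.2 (mem_filter.1 hJ).2)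
    (fun _ hS => mem_filter.2 ⟨mem_univ _, mem_powerset.1 hS⟩)
    (fun _ _ => rfl) (fun _ _ => rfl) (fun _ _ => rfl)

theorem ite_div_eOf_sub_one_eq {e : ℝ} (h0 : e ≠ 0) (h1 : e ≠ 1) (a p : Bool) :
    (if a = p then (1 : ℝ) else 0) / eOf e p - 1
      = (1 + (if p then 1 else 0) * (-1 / e)) * (1 + (if a then 1 else 0) * (-1 / e))
          * (e / (1 - e)) := by
  have h1' : 1 - e ≠ 0 := sub_ne_zero.2 h1.symm
  cases a <;> cases p <;>
    simp only [eOf, reduceCtorEq, Bool.false_eq_true, if_true, if_false] <;> field_simp <;> ring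

theorem phiB_mul_TB_mul_phiB (m β : ℕ) (e : Fin m → ℝ) (a p : Fin m → Bool) (J K : IdxSet m β) :
    phiB m β p J * TB m β e J K * phiB m β a K
      = (∏ j ∈ J.1, (if p j then 1 else 0) * (-1 / e j))
        * (∏ k ∈ K.1, (if a k then 1 else 0) * (-1 / e k))
        * ∑ U : IdxSet m β, if J.1 ∪ K.1 ⊆ U.1 then ∏ ℓ ∈ U.1, e ℓ / (1 - e ℓ) else 0 := by
  simp only [phiB, TB, Matrix.of_apply, prod_mul_distrib]
  ring

theorem polynomial_weight_identity_general
    (m β : ℕ)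
    (e : Fin m → ℝ) (he : ∀ j, 0 < e j ∧ e j < 1)
    (a p : Fin m → Bool) :
    ∑ J : IdxSet m β, ∑ K : IdxSet m β,
        phiB m β p J * TB m β e J K * phiB m β a K
      = ∑ U : IdxSet m β,
          ∏ ℓ ∈ U.1, ((if a ℓ = p ℓ then (1 : ℝ) else 0) / eOf (e ℓ) (p ℓ) - 1) := by
  simp_rw [phiB_mul_TB_mul_phiB, sum_sum_mul_sum_union_subset (fun J : IdxSet m β => J.1),
    IdxSet.sum_ite_subset_prod, ← prod_mul_distrib]
  refine sum_congr rfl fun U _ => prod_congr rfl fun ℓ _ => ?_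
  exact (ite_div_eOf_sub_one_eq (he ℓ).1.ne' (he ℓ).2.ne (a ℓ) (p ℓ)).symm

/-- **Appendix C weight identity: explicit form of the polynomial additive IPW weight.**
For every `m ≥ 1`, `1 ≤ β ≤ m`, `e ∈ (0,1)^m`, and all `a, p ∈ {0,1}^m`,
`φ_β(p)ᵀ T_β(e) φ_β(a) = Σ_{U ∈ I_β} ∏_{ℓ∈U} (1{a_ℓ = p_ℓ}/e_ℓ(p_ℓ) − 1)`. -/
theorem polynomial_weight_identity
    (m β : ℕ) (hm : 1 ≤ m) (hβ₁ : 1 ≤ β) (hβ₂ : β ≤ m)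
    (e : Fin m → ℝ) (he : ∀ j, 0 < e j ∧ e j < 1)
    (a p : Fin m → Bool) :
    ∑ J : IdxSet m β, ∑ K : IdxSet m β,
        phiB m β p J * TB m β e J K * phiB m β a K
      = ∑ U : IdxSet m β,
          ∏ ℓ ∈ U.1, ((if a ℓ = p ℓ then (1 : ℝ) else 0) / eOf (e ℓ) (p ℓ) - 1) :=
  polynomial_weight_identity_general m β e he a p
end

section
/- Identification of the policy value under the additive outcome model (Equation (7)). Under the cluster model with fixed cluster size m, the factored propensity score assumption, the heterogeneous additive outcome model, consistency, and unconfoundedness, for every measurable policy assignment p : 𝒳 → {0,1}^m one has E[ (1/m) Σ_{j=1}^m Y_j(p(X)) ] = E[ (1/m) Σ_{j=1}^m ( g_j^{(0)}(X) + Σ_{k=1}^m g_j^{(k)}(X) p_k(X) ) ]. -/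
/-!
Fix a treatment vector `a` and a unit `j`, and write `h_j(x, a) = g_j⁰(x) + Σ_k g_jᵏ(x) a_k`.
Unconfoundedness factorises `E[Y_j(a) 1{A = a} | X]` as `E[Y_j(a) | X] · P(A = a | X)`, while
consistency, the tower property through `σ(A, X)` and the additive model compute the same
quantity as `h_j(X, a) · P(A = a | X)`. The factored propensity score is positive, so
`E[Y_j(a) | X] = h_j(X, a)`. Splitting `Ω` along the finitely many values of `p(X)`, which are
`X`-measurable events, turns this into the identity of the two policy values.
-/

open MeasureTheory ProbabilityTheory Finset
open scoped ENNReal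

section CondExp

variable {Ω : Type*} {m' mΩ : MeasurableSpace Ω} {μ : Measure Ω}

theorem setIntegral_mul_condExp {c f : Ω → ℝ} {s : Set Ω} (hm' : m' ≤ mΩ)
    [SigmaFinite (μ.trim hm')] (hc : StronglyMeasurable[m'] c) (hcf : Integrable (c * f) μ)
    (hf : Integrable f μ) (hs : MeasurableSet[m'] s) :
    ∫ ω in s, c ω * μ[f | m'] ω ∂μ = ∫ ω in s, c ω * f ω ∂μ := by
  refine (setIntegral_congr_ae (hm' s hs) ?_).trans (setIntegral_condExp hm' hcf hs)
  filter_upwards [condExp_mul_of_stronglyMeasurable_left hc hcf hf] with ω h _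
  exact h.symm

theorem condExp_indicator_nonneg (s : Set Ω) : 0 ≤ᵐ[μ] (μ⟦s | m'⟧) :=
  condExp_nonneg (.of_forall fun ω => Set.indicator_nonneg (fun _ _ => zero_le_one) ω)

theorem norm_condExp_indicator_le_one (s : Set Ω) : ∀ᵐ ω ∂μ, ‖(μ⟦s | m'⟧) ω‖ ≤ 1 := by
  refine ae_bdd_abs_condExp_of_ae_bdd_abs (.of_forall fun ω => ?_)
  by_cases h : ω ∈ s <;> simp [h]

end CondExp

namespace ProbabilityTheory.CondIndepFun

variable {Ω γ δ : Type*} {m' mΩ : MeasurableSpace Ω} [StandardBorelSpace Ω]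
  {hm' : m' ≤ mΩ} {μ : Measure Ω} [IsFiniteMeasure μ] [MeasurableSpace γ] [MeasurableSpace δ]
  {W : Ω → γ} {A : Ω → δ} {s : Set Ω} {t : Set δ}

theorem measureReal_inter_preimage_inter (hWA : CondIndepFun m' hm' W A μ) (hW : Measurable W)
    (hA : Measurable A) (hs : MeasurableSet[m'] s) {u : Set γ} (hu : MeasurableSet u)
    (ht : MeasurableSet t) :
    μ.real (s ∩ (W ⁻¹' u ∩ A ⁻¹' t)) = ∫ ω in s ∩ W ⁻¹' u, (μ⟦A ⁻¹' t | m'⟧) ω ∂μ := by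
  have hU : MeasurableSet (W ⁻¹' u) := hW hu
  have hUT : MeasurableSet (W ⁻¹' u ∩ A ⁻¹' t) := hU.inter (hA ht)
  have hcU : (fun ω => (μ⟦A ⁻¹' t | m'⟧) ω * (W ⁻¹' u).indicator (fun _ => 1) ω)
      = (W ⁻¹' u).indicator (μ⟦A ⁻¹' t | m'⟧) := by
    funext ω
    by_cases h : ω ∈ W ⁻¹' u <;> simp [h]
  calc μ.real (s ∩ (W ⁻¹' u ∩ A ⁻¹' t))
      = ∫ ω in s, (μ⟦W ⁻¹' u ∩ A ⁻¹' t | m'⟧) ω ∂μ := by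
        rw [setIntegral_condExp hm' ((integrable_const 1).indicator hUT) hs,
          setIntegral_indicator hUT, setIntegral_const, smul_eq_mul, mul_one]
    _ = ∫ ω in s, (μ⟦A ⁻¹' t | m'⟧) ω * (μ⟦W ⁻¹' u | m'⟧) ω ∂μ := by
        refine setIntegral_congr_ae (hm' s hs) ?_
        filter_upwards [(condIndepFun_iff_condExp_inter_preimage_eq_mul hW hA).1 hWA u t hu ht]
          with ω h _
        rw [h, mul_comm]
    _ = ∫ ω in s, (μ⟦A ⁻¹' t | m'⟧) ω * (W ⁻¹' u).indicator (fun _ => 1) ω ∂μ :=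
        setIntegral_mul_condExp hm' stronglyMeasurable_condExp
          (by rw [Pi.mul_def, hcU]; exact integrable_condExp.indicator hU)
          ((integrable_const 1).indicator hU) hs
    _ = ∫ ω in s ∩ W ⁻¹' u, (μ⟦A ⁻¹' t | m'⟧) ω ∂μ := by
        rw [hcU, setIntegral_indicator hU]

theorem map_restrict_inter_preimage (hWA : CondIndepFun m' hm' W A μ) (hW : Measurable W)
    (hA : Measurable A) (hs : MeasurableSet[m'] s) (ht : MeasurableSet t) :
    (μ.restrict (s ∩ A ⁻¹' t)).map W
      = ((μ.restrict s).withDensity fun ω => ENNReal.ofReal ((μ⟦A ⁻¹' t | m'⟧) ω)).map W := by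
  ext u hu
  rw [Measure.map_apply hW hu, Measure.map_apply hW hu, Measure.restrict_apply (hW hu),
    withDensity_apply _ (hW hu), Measure.restrict_restrict (hW hu),
    ← ofReal_integral_eq_lintegral_ofReal integrable_condExp.integrableOn
      (ae_restrict_of_ae (condExp_indicator_nonneg _)),
    Set.inter_comm (W ⁻¹' u) s, ← hWA.measureReal_inter_preimage_inter hW hA hs hu ht,
    measureReal_def, ENNReal.ofReal_toReal (measure_ne_top μ _), Set.inter_left_comm]

-- Conditional independence only speaks about events; comparing laws of `W` extends it to `φ ∘ W`.
theorem setIntegral_indicator_preimage (hWA : CondIndepFun m' hm' W A μ) (hW : Measurable W)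
    (hA : Measurable A) (hs : MeasurableSet[m'] s) (ht : MeasurableSet t) {φ : γ → ℝ}
    (hφ : Measurable φ) :
    ∫ ω in s, (A ⁻¹' t).indicator (φ ∘ W) ω ∂μ = ∫ ω in s, (μ⟦A ⁻¹' t | m'⟧) ω * φ (W ω) ∂μ := by
  have hc : Measurable (μ⟦A ⁻¹' t | m'⟧) := (stronglyMeasurable_condExp.mono hm').measurable
  calc ∫ ω in s, (A ⁻¹' t).indicator (φ ∘ W) ω ∂μ
      = ∫ ω, φ (W ω) ∂(μ.restrict (s ∩ A ⁻¹' t)) := by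
        rw [setIntegral_indicator (hA ht)]; rfl
    _ = ∫ ω, φ (W ω) ∂((μ.restrict s).withDensity
          fun ω => (((μ⟦A ⁻¹' t | m'⟧) ω).toNNReal : ℝ≥0∞)) := by
        rw [← integral_map hW.aemeasurable hφ.aestronglyMeasurable,
          hWA.map_restrict_inter_preimage hW hA hs ht,
          integral_map hW.aemeasurable hφ.aestronglyMeasurable]
        rfl
    _ = ∫ ω in s, (μ⟦A ⁻¹' t | m'⟧) ω * φ (W ω) ∂μ := by
        rw [integral_withDensity_eq_integral_smul hc.real_toNNReal]
        refine integral_congr_ae ?_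
        filter_upwards [ae_restrict_of_ae (condExp_indicator_nonneg (A ⁻¹' t))] with ω h
        rw [NNReal.smul_def, Real.coe_toNNReal _ h, smul_eq_mul]

theorem condExp_indicator_preimage_eq_mul (hWA : CondIndepFun m' hm' W A μ) (hW : Measurable W)
    (hA : Measurable A) (ht : MeasurableSet t) {φ : γ → ℝ} (hφ : Measurable φ)
    (hφW : Integrable (φ ∘ W) μ) :
    μ[(A ⁻¹' t).indicator (φ ∘ W) | m'] =ᵐ[μ] (μ⟦A ⁻¹' t | m'⟧) * μ[φ ∘ W | m'] := by
  have hc_bdd := norm_condExp_indicator_le_one (μ := μ) (m' := m') (A ⁻¹' t)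
  have hc_meas : AEStronglyMeasurable (μ⟦A ⁻¹' t | m'⟧) μ :=
    (stronglyMeasurable_condExp.mono hm').aestronglyMeasurable
  refine (ae_eq_condExp_of_forall_setIntegral_eq hm' (hφW.indicator (hA ht))
    (fun _ _ _ => (integrable_condExp.bdd_mul hc_meas hc_bdd).integrableOn) (fun s hs _ => ?_)
    (stronglyMeasurable_condExp.mul stronglyMeasurable_condExp).aestronglyMeasurable).symm
  rw [setIntegral_mul_condExp hm' stronglyMeasurable_condExp (hφW.bdd_mul hc_meas hc_bdd) hφW hs,
    hWA.setIntegral_indicator_preimage hW hA hs ht hφ]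
  rfl

end ProbabilityTheory.CondIndepFun

section Identification

variable {Ω γ δ : Type*} {m' m₂ mΩ : MeasurableSpace Ω} [StandardBorelSpace Ω] {μ : Measure Ω}
  [IsFiniteMeasure μ] [MeasurableSpace γ] [MeasurableSpace δ]

theorem condExp_comp_eq_of_condIndepFun (hm'₂ : m' ≤ m₂) (hm₂ : m₂ ≤ mΩ)
    {W : Ω → γ} (hW : Measurable W) {A : Ω → δ} (hA : Measurable[m₂] A)
    (hWA : CondIndepFun m' (hm'₂.trans hm₂) W A μ) {φ : γ → ℝ} (hφ : Measurable φ)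
    (hφW : Integrable (φ ∘ W) μ) {t : Set δ} (ht : MeasurableSet t) {Y : Ω → ℝ}
    (hY : Integrable Y μ) (hcons : ∀ᵐ ω ∂μ, A ω ∈ t → Y ω = φ (W ω)) {k : Ω → ℝ}
    (hk : StronglyMeasurable[m'] k) (hk_int : Integrable k μ)
    (hreg : ∀ᵐ ω ∂μ, A ω ∈ t → μ[Y | m₂] ω = k ω)
    (hpos : ∀ᵐ ω ∂μ, (μ⟦A ⁻¹' t | m'⟧) ω ≠ 0) :
    μ[φ ∘ W | m'] =ᵐ[μ] k := by
  set T := A ⁻¹' t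
  have hT : MeasurableSet[m₂] T := hA ht
  have hkT : k * T.indicator (fun _ => 1) = T.indicator k := by
    funext ω
    by_cases h : ω ∈ T <;> simp [h]
  have hcons' : T.indicator (φ ∘ W) =ᵐ[μ] T.indicator Y := by
    filter_upwards [hcons] with ω h
    by_cases hω : ω ∈ T
    · simp [hω, h hω]
    · simp [hω]
  have hreg' : μ[T.indicator Y | m₂] =ᵐ[μ] k * T.indicator (fun _ => 1) := by
    filter_upwards [condExp_indicator hY hT, hreg] with ω h h'
    rw [h, hkT]
    by_cases hω : ω ∈ T
    · simp [hω, h' hω]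
    · simp [hω]
  have hobs : μ[T.indicator Y | m'] =ᵐ[μ] k * μ⟦T | m'⟧ :=
    (condExp_condExp_of_le hm'₂ hm₂).symm.trans <| (condExp_congr_ae hreg').trans <|
      condExp_mul_of_stronglyMeasurable_left hk (by rw [hkT]; exact hk_int.indicator (hm₂ _ hT))
        ((integrable_const 1).indicator (hm₂ _ hT))
  filter_upwards [hWA.condExp_indicator_preimage_eq_mul hW (hA.mono hm₂ le_rfl) ht hφ hφW,
    condExp_congr_ae hcons' (m := m'), hobs, hpos] with ω h₁ h₂ h₃ h₄
  refine mul_left_cancel₀ h₄ ?_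
  rw [mul_comm _ (k ω), ← Pi.mul_apply, ← Pi.mul_apply, ← h₁, h₂, h₃]

end Identification

theorem condExp_const_mul_sum_of_ae_eq {Ω ι : Type*} [Fintype ι] {m' mΩ : MeasurableSpace Ω}
    {μ : Measure Ω} {f h : ι → Ω → ℝ} (hf : ∀ i, Integrable (f i) μ)
    (hfh : ∀ i, μ[f i | m'] =ᵐ[μ] h i) (c : ℝ) :
    μ[fun ω => c * ∑ i, f i ω | m'] =ᵐ[μ] fun ω => c * ∑ i, h i ω := by
  have hsum : (fun ω => c * ∑ i, f i ω) = c • ∑ i, f i := by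
    funext ω
    simp [Finset.sum_apply]
  rw [hsum]
  filter_upwards [condExp_smul c (∑ i, f i) m', condExp_finsetSum (fun i _ => hf i) m',
    ae_all_iff.2 hfh] with ω h₁ h₂ h₃
  rw [h₁, Pi.smul_apply, h₂, Finset.sum_apply, smul_eq_mul]
  simp only [h₃]

theorem integral_comp_eq_of_condExp_eq {Ω α : Type*} {m' mΩ : MeasurableSpace Ω} {μ : Measure Ω}
    [Fintype α] [MeasurableSpace α] [MeasurableSingletonClass α] (hm' : m' ≤ mΩ)
    [SigmaFinite (μ.trim hm')] {P : Ω → α} (hP : Measurable[m'] P) {F G : α → Ω → ℝ}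
    (hF : ∀ a, Integrable (F a) μ) (hG : ∀ a, Integrable (G a) μ)
    (hFG : ∀ a, μ[F a | m'] =ᵐ[μ] G a) :
    ∫ ω, F (P ω) ω ∂μ = ∫ ω, G (P ω) ω ∂μ := by
  have hPa (a : α) : MeasurableSet[m'] (P ⁻¹' {a}) := hP (measurableSet_singleton a)
  have hsplit (H : α → Ω → ℝ) :
      (fun ω => H (P ω) ω) = fun ω => ∑ a, (P ⁻¹' {a}).indicator (H a) ω := by
    funext ω
    rw [Finset.sum_eq_single (P ω) (fun a _ ha => by simp [Ne.symm ha]) (by simp)]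
    simp
  rw [hsplit F, hsplit G, integral_finsetSum _ fun a _ => (hF a).indicator (hm' _ (hPa a)),
    integral_finsetSum _ fun a _ => (hG a).indicator (hm' _ (hPa a))]
  refine Finset.sum_congr rfl fun a _ => ?_
  rw [integral_indicator (hm' _ (hPa a)), integral_indicator (hm' _ (hPa a)),
    ← setIntegral_condExp hm' (hF a) (hPa a)]
  refine setIntegral_congr_ae (hm' _ (hPa a)) ?_
  filter_upwards [hFG a] with ω h _ using h

section AdditiveOutcome

variable {𝒳 : Type*} {m : ℕ} {g : Fin m → Option (Fin m) → 𝒳 → ℝ}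

def additiveOutcome (g : Fin m → Option (Fin m) → 𝒳 → ℝ) (x : 𝒳) (a : Fin m → Bool)
    (j : Fin m) : ℝ :=
  g j none x + ∑ k : Fin m, g j (some k) x * (if a k then (1 : ℝ) else 0)

theorem measurable_additiveOutcome [MeasurableSpace 𝒳] (hg : ∀ j k, Measurable (g j k))
    (a : Fin m → Bool) (j : Fin m) : Measurable fun x => additiveOutcome g x a j :=
  (hg j none).add (Finset.measurable_sum _ fun k _ => (hg j (some k)).mul measurable_const)

theorem abs_additiveOutcome_le {C : ℝ} (hC : ∀ j k x, |g j k x| ≤ C) (x : 𝒳) (a : Fin m → Bool)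
    (j : Fin m) : |additiveOutcome g x a j| ≤ (m + 1) * C := by
  have hterm (k : Fin m) : |g j (some k) x * (if a k then (1 : ℝ) else 0)| ≤ C := by
    rw [abs_mul]
    exact (mul_le_of_le_one_right (abs_nonneg _) (by split_ifs <;> simp)).trans (hC j (some k) x)
  calc |additiveOutcome g x a j|
      ≤ |g j none x| + ∑ k : Fin m, |g j (some k) x * (if a k then (1 : ℝ) else 0)| :=
        (abs_add_le _ _).trans (add_le_add le_rfl (Finset.abs_sum_le_sum_abs _ _))
    _ ≤ C + ∑ _k : Fin m, C := add_le_add (hC j none x) (Finset.sum_le_sum fun k _ => hterm k)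
    _ = (m + 1) * C := by simp; ring

end AdditiveOutcome

theorem prod_propensity_pos {ι : Type*} [Fintype ι] {e : ι → ℝ} (he : ∀ j, 0 < e j ∧ e j < 1)
    (a : ι → Bool) : 0 < ∏ j, if a j then e j else 1 - e j := by
  refine Finset.prod_pos fun j _ => ?_
  split_ifs
  exacts [(he j).1, sub_pos.2 (he j).2]

theorem policy_value_identification_general
    {Ω : Type*} [MeasurableSpace Ω] [StandardBorelSpace Ω]
    (μ : Measure Ω) [IsProbabilityMeasure μ]
    {𝒳 : Type*} [MeasurableSpace 𝒳]
    (m : ℕ)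
    (X : Ω → 𝒳) (hX : Measurable X)
    (A : Ω → Fin m → Bool) (hA : Measurable A)
    (Y : Ω → Fin m → ℝ)
    (hYint : ∀ j, Integrable (fun ω => Y ω j) μ)
    (e : Fin m → 𝒳 → ℝ)
    (he : ∀ j x, 0 < e j x ∧ e j x < 1)
    -- factored propensity score: P(A = a | X) = ∏_j P(A_j = a_j | X) = ∏_j e_j(X)(a_j)
    (hfac : ∀ a : Fin m → Bool,
      μ[(fun ω => if A ω = a then (1 : ℝ) else 0) | MeasurableSpace.comap X inferInstance]
        =ᵐ[μ] fun ω => ∏ j : Fin m,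
          (if a j then e j (X ω) else 1 - e j (X ω)))
    -- heterogeneous additive outcome model
    (g : Fin m → Option (Fin m) → 𝒳 → ℝ)
    (hg_meas : ∀ j k, Measurable (g j k))
    (hg_bdd : ∃ C, ∀ j k x, |g j k x| ≤ C)
    (hadd : ∀ j : Fin m,
      μ[(fun ω => Y ω j) | MeasurableSpace.comap (fun ω => (A ω, X ω)) inferInstance]
        =ᵐ[μ] fun ω => g j none (X ω)
          + ∑ k : Fin m, g j (some k) (X ω) * (if A ω k then (1 : ℝ) else 0))
    -- potential outcomes, consistency and unconfoundedness
    (Ypot : (Fin m → Bool) → Ω → Fin m → ℝ)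
    (hYpot_meas : ∀ a, Measurable (Ypot a))
    (hYpot_int : ∀ a j, Integrable (fun ω => Ypot a ω j) μ)
    (hconsistency : ∀ᵐ ω ∂μ, Y ω = Ypot (A ω) ω)
    (hunconf : CondIndepFun (MeasurableSpace.comap X inferInstance) hX.comap_le
      (fun ω => fun a : Fin m → Bool => Ypot a ω) A μ)
    -- policy assignment
    (p : 𝒳 → Fin m → Bool) (hp : Measurable p) :
    ∫ ω, (1 : ℝ) / m * ∑ j : Fin m, Ypot (p (X ω)) ω j ∂μ
      = ∫ ω, (1 : ℝ) / m * ∑ j : Fin m,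
          (g j none (X ω)
            + ∑ k : Fin m, g j (some k) (X ω) * (if p (X ω) k then (1 : ℝ) else 0)) ∂μ := by
  obtain ⟨C, hC⟩ := hg_bdd
  have hAX : Measurable[MeasurableSpace.comap (fun ω => (A ω, X ω)) inferInstance]
      (fun ω => (A ω, X ω)) := comap_measurable _
  have hreg_int (a : Fin m → Bool) (j : Fin m) :
      Integrable (fun ω => additiveOutcome g (X ω) a j) μ :=
    .of_bound ((measurable_additiveOutcome hg_meas a j).comp hX).aestronglyMeasurable _
      (.of_forall fun ω => abs_additiveOutcome_le hC (X ω) a j)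
  have hpos (a : Fin m → Bool) :
      ∀ᵐ ω ∂μ, (μ⟦A ⁻¹' {a} | MeasurableSpace.comap X inferInstance⟧) ω ≠ 0 := by
    have hind : (A ⁻¹' {a}).indicator (fun _ => (1 : ℝ)) = fun ω => if A ω = a then 1 else 0 := by
      funext ω
      by_cases h : A ω = a <;> simp [h]
    filter_upwards [hind ▸ hfac a] with ω h
    exact h ▸ (prod_propensity_pos (fun j => he j (X ω)) a).ne'
  have hident (a : Fin m → Bool) (j : Fin m) :
      μ[fun ω => Ypot a ω j | MeasurableSpace.comap X inferInstance]
        =ᵐ[μ] fun ω => additiveOutcome g (X ω) a j := by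
    exact condExp_comp_eq_of_condIndepFun (A := A) (φ := fun w => w a j)
      (measurable_snd.comp hAX).comap_le (hA.prodMk hX).comap_le
      (measurable_pi_lambda _ hYpot_meas) (measurable_fst.comp hAX) hunconf (by fun_prop)
      (hYpot_int a j) (measurableSet_singleton a) (hYint j)
      (hconsistency.mono fun ω h ha => by rw [h, Set.mem_singleton_iff.1 ha])
      ((measurable_additiveOutcome hg_meas a j).comp (comap_measurable X)).stronglyMeasurable
      (hreg_int a j) ((hadd j).mono fun ω h ha => by rw [h, ← Set.mem_singleton_iff.1 ha]; rfl)
      (hpos a)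
  exact integral_comp_eq_of_condExp_eq hX.comap_le (hp.comp (comap_measurable X))
    (F := fun a ω => (1 : ℝ) / m * ∑ j, Ypot a ω j)
    (G := fun a ω => (1 : ℝ) / m * ∑ j, additiveOutcome g (X ω) a j)
    (fun a => (integrable_finsetSum _ fun j _ => hYpot_int a j).const_mul _)
    (fun a => (integrable_finsetSum _ fun j _ => hreg_int a j).const_mul _)
    fun a => condExp_const_mul_sum_of_ae_eq (hYpot_int a) (hident a) _

/-- **Identification of the policy value under the additive outcome model (Equation (7)).**
Under the cluster model with fixed cluster size `m`, the factored propensity score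
assumption, the heterogeneous additive outcome model, consistency, and unconfoundedness,
for every measurable policy assignment `p : 𝒳 → {0,1}^m`,
`E[(1/m) Σ_j Y_j(p(X))] = E[(1/m) Σ_j (g_j^{(0)}(X) + Σ_k g_j^{(k)}(X) p_k(X))]`.
The coefficient index `Option (Fin m)` uses `none` for the intercept index `k = 0`
and `some k` for `1 ≤ k ≤ m`; `eOf e a` denotes `e` if `a = 1` and `1 − e` if `a = 0`. -/
theorem policy_value_identification
    {Ω : Type*} [MeasurableSpace Ω] [StandardBorelSpace Ω] [Nonempty Ω]
    (μ : Measure Ω) [IsProbabilityMeasure μ]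
    {𝒳 : Type*} [MeasurableSpace 𝒳]
    (m : ℕ) (hm : 1 ≤ m)
    (X : Ω → 𝒳) (hX : Measurable X)
    (A : Ω → Fin m → Bool) (hA : Measurable A)
    (Y : Ω → Fin m → ℝ) (hY : Measurable Y)
    (hYint : ∀ j, Integrable (fun ω => Y ω j) μ)
    (e : Fin m → 𝒳 → ℝ) (he_meas : ∀ j, Measurable (e j))
    (he : ∀ j x, 0 < e j x ∧ e j x < 1)
    -- factored propensity score: P(A = a | X) = ∏_j P(A_j = a_j | X) = ∏_j e_j(X)(a_j)
    (hfac : ∀ a : Fin m → Bool,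
      μ[(fun ω => if A ω = a then (1 : ℝ) else 0) | MeasurableSpace.comap X inferInstance]
        =ᵐ[μ] fun ω => ∏ j : Fin m,
          (if a j then e j (X ω) else 1 - e j (X ω)))
    -- heterogeneous additive outcome model
    (g : Fin m → Option (Fin m) → 𝒳 → ℝ)
    (hg_meas : ∀ j k, Measurable (g j k))
    (hg_bdd : ∃ C, ∀ j k x, |g j k x| ≤ C)
    (hadd : ∀ j : Fin m,
      μ[(fun ω => Y ω j) | MeasurableSpace.comap (fun ω => (A ω, X ω)) inferInstance]
        =ᵐ[μ] fun ω => g j none (X ω)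
          + ∑ k : Fin m, g j (some k) (X ω) * (if A ω k then (1 : ℝ) else 0))
    -- potential outcomes, consistency and unconfoundedness
    (Ypot : (Fin m → Bool) → Ω → Fin m → ℝ)
    (hYpot_meas : ∀ a, Measurable (Ypot a))
    (hYpot_int : ∀ a j, Integrable (fun ω => Ypot a ω j) μ)
    (hconsistency : ∀ᵐ ω ∂μ, Y ω = Ypot (A ω) ω)
    (hunconf : CondIndepFun (MeasurableSpace.comap X inferInstance) hX.comap_le
      (fun ω => fun a : Fin m → Bool => Ypot a ω) A μ)
    -- policy assignment
    (p : 𝒳 → Fin m → Bool) (hp : Measurable p) :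
    ∫ ω, (1 : ℝ) / m * ∑ j : Fin m, Ypot (p (X ω)) ω j ∂μ
      = ∫ ω, (1 : ℝ) / m * ∑ j : Fin m,
          (g j none (X ω)
            + ∑ k : Fin m, g j (some k) (X ω) * (if p (X ω) k then (1 : ℝ) else 0)) ∂μ :=
  policy_value_identification_general μ m X hX A hA Y hYint e he hfac g hg_meas hg_bdd hadd Ypot
    hYpot_meas hYpot_int hconsistency hunconf p hp
end

section
/- Variance identity for the doubly robust policy value score (the computation concluding the proof of Theorem 2, fixed cluster size). Under the cluster model with fixed cluster size m, the factored propensity score assumption, and the additive outcome model E[Y | A, X] = G(X) φ(A) almost surely, assume all relevant random variables are square-integrable and assume homoskedasticity: E[ (w^T (Y − G(X) φ(A)))² | A, X ] = σ² almost surely for a constant σ² ≥ 0, where w = (1/m, …, 1/m) ∈ ℝ^m. Then for every measurable policy assignment p : 𝒳 → {0,1}^m, the real random variable Z = w^T [ G(X) + (Y − G(X) φ(A)) φ(A)^T T(e(X)) ] φ(p(X)) satisfies Var(Z) = Var( w^T G(X) φ(p(X)) ) + σ² E[ φ(p(X))^T T(e(X)) φ(p(X)) ]. -/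
/-!
The score splits as `Z = W + U * S` with `W = wᵀ G(X) φ(p(X))`, `S = φ(A)ᵀ T(e(X)) φ(p(X))`
and the residual `U = wᵀ (Y - G(X) φ(A))`. Both `W` and `S` are functions of `(A, X)`, while
`E[U | A, X] = 0` and `E[U² | A, X] = σ²`; conditioning on `(A, X)` therefore kills the mean and
cross terms and gives `Var Z = Var W + σ² E[S²]`. Given `X`, the `A_j` are independent Bernoulli
variables, so `E[S² | X] = vᵀ M v` with `v = T φ(p(X))` and `M = E[φ(A) φ(A)ᵀ | X]`; since
`T = M⁻¹` this is `φ(p(X))ᵀ T φ(p(X))`.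
-/

open MeasureTheory ProbabilityTheory Finset

/-- The feature vector `φ(a) = (1, a₁, …, a_m)`, indexed by `Option (Fin m)` where `none`
is the intercept coordinate. -/
noncomputable def phiVec (m : ℕ) (a : Fin m → Bool) : Option (Fin m) → ℝ :=
  fun i => match i with
  | none => 1
  | some j => if a j then 1 else 0

/-- The explicit matrix `T(e)` of Equation (9); under the factored propensity score it is
the inverse of the conditional second-moment matrix `E[φ(A)φ(A)ᵀ | X]`. -/
noncomputable def TMat (m : ℕ) (e : Fin m → ℝ) :
    Matrix (Option (Fin m)) (Option (Fin m)) ℝ :=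
  Matrix.of fun i j =>
    match i, j with
    | none, none => 1 + ∑ k : Fin m, e k / (1 - e k)
    | none, some k => -(1 / (1 - e k))
    | some j', none => -(1 / (1 - e j'))
    | some j', some k => if j' = k then 1 / (e j' * (1 - e j')) else 0

/-- The doubly robust policy value score at one observation:
`Z = wᵀ [ G + (y − G φ(a)) φ(a)ᵀ T(e) ] φ(p)` with uniform weights `w = (1/m,…,1/m)`. -/
noncomputable def drZ (m : ℕ) (Gx : Fin m → Option (Fin m) → ℝ) (y : Fin m → ℝ)
    (a pb : Fin m → Bool) (ev : Fin m → ℝ) : ℝ :=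
  ∑ j : Fin m, (1 / m : ℝ) *
    ∑ k : Option (Fin m),
      (Gx j k
        + (y j - ∑ l : Option (Fin m), Gx j l * phiVec m a l) *
            ∑ l : Option (Fin m), phiVec m a l * TMat m ev l k) * phiVec m pb k

open Matrix
open scoped ENNReal

/-- `E[φ(A) φ(A)ᵀ]` when the `A_j` are independent Bernoulli variables with means `e_j`. -/
noncomputable def phiSecondMoment (m : ℕ) (e : Fin m → ℝ) :
    Matrix (Option (Fin m)) (Option (Fin m)) ℝ :=
  Matrix.of fun i j =>
    match i, j with
    | none, none => 1
    | none, some k => e k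
    | some j', none => e j'
    | some j', some k => if j' = k then e j' else e j' * e k

lemma sum_prod_eOf_mul {m : ℕ} (e : Fin m → ℝ) (h : Fin m → Bool → ℝ) :
    ∑ a : Fin m → Bool, ∏ j, eOf (e j) (a j) * h j (a j)
      = ∏ j, ((1 - e j) * h j false + e j * h j true) := by
  rw [← Fintype.prod_sum fun j b => eOf (e j) b * h j b]
  simp [eOf, add_comm]

lemma phiVec_eq_prod {m : ℕ} (a : Fin m → Bool) (l : Option (Fin m)) :
    phiVec m a l = ∏ j, if l = some j then (if a j then 1 else 0) else 1 := by
  cases l <;> simp [phiVec]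

lemma sum_prod_eOf_mul_phiVec_mul_phiVec {m : ℕ} (e : Fin m → ℝ) (l k : Option (Fin m)) :
    ∑ a : Fin m → Bool, (∏ j, eOf (e j) (a j)) * (phiVec m a l * phiVec m a k)
      = phiSecondMoment m e l k := by
  simp_rw [phiVec_eq_prod, ← prod_mul_distrib]
  refine (sum_prod_eOf_mul e fun j b =>
    (if l = some j then (if b then 1 else 0) else 1) *
      (if k = some j then (if b then 1 else 0) else 1)).trans ?_
  have factor : ∀ j, (1 - e j) * ((if l = some j then (if false then 1 else 0) else 1) *
        (if k = some j then (if false then 1 else 0) else 1)) +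
      e j * ((if l = some j then (if true then 1 else 0) else 1) *
        (if k = some j then (if true then 1 else 0) else 1))
      = if l = some j ∨ k = some j then e j else 1 := by
    intro j; split_ifs <;> simp_all
  rw [prod_congr rfl fun j _ => factor j]
  rcases l with _ | i <;> rcases k with _ | k
  · simp [phiSecondMoment]
  · simp [phiSecondMoment]
  · simp [phiSecondMoment]
  · by_cases hik : i = k
    · subst hik; simp [phiSecondMoment]
    · have split : ∀ j, (if some i = some j ∨ some k = some j then e j else 1)
          = (if i = j then e j else 1) * (if k = j then e j else 1) := by
        intro j; by_cases hij : i = j <;> by_cases hkj : k = j <;> simp_all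
      rw [prod_congr rfl fun j _ => split j, prod_mul_distrib]
      simp [phiSecondMoment, hik]

lemma TMat_mul_phiSecondMoment {m : ℕ} {e : Fin m → ℝ} (he0 : ∀ j, e j ≠ 0)
    (he1 : ∀ j, 1 - e j ≠ 0) : TMat m e * phiSecondMoment m e = 1 := by
  ext i k
  rw [Matrix.mul_apply, Fintype.sum_option]
  rcases i with _ | i <;> rcases k with _ | k
  · simp only [TMat, phiSecondMoment, Matrix.of_apply, Matrix.one_apply_eq, mul_one]
    rw [add_assoc, ← sum_add_distrib, sum_eq_zero fun j _ => ?_, add_zero]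
    field_simp [he1 j]; ring
  · have term : ∀ j, -(1 / (1 - e j)) * (if j = k then e j else e j * e k)
        = -(e k * (e j / (1 - e j))) + (if j = k then -e k else 0) := by
      intro j; split_ifs with hjk
      · subst hjk; field_simp [he1 j]; ring
      · field_simp [he1 j]; ring
    simp only [TMat, phiSecondMoment, Matrix.of_apply, Matrix.one_apply, term, sum_add_distrib,
      sum_ite_eq', mem_univ, if_true, ← mul_sum, sum_neg_distrib, reduceCtorEq, if_false]
    ring
  all_goals
    simp only [TMat, phiSecondMoment, Matrix.of_apply, Matrix.one_apply, ite_mul, zero_mul,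
      sum_ite_eq, mem_univ, if_true, Option.some_inj, reduceCtorEq, if_false]
  · field_simp [he0 i, he1 i]; ring
  · split_ifs with hik
    · subst hik; field_simp [he0 i, he1 i]; ring
    · field_simp [he0 i, he1 i]; ring

lemma sum_prod_eOf_mul_sq_vecMul_TMat_dotProduct {m : ℕ} {e : Fin m → ℝ} (he0 : ∀ j, e j ≠ 0)
    (he1 : ∀ j, 1 - e j ≠ 0) (u : Option (Fin m) → ℝ) :
    ∑ a : Fin m → Bool, (∏ j, eOf (e j) (a j)) * ((phiVec m a ᵥ* TMat m e) ⬝ᵥ u) ^ 2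
      = u ⬝ᵥ (TMat m e *ᵥ u) := by
  set v := TMat m e *ᵥ u
  have hMv : phiSecondMoment m e *ᵥ v = u := by
    rw [mulVec_mulVec, mul_eq_one_comm.mp (TMat_mul_phiSecondMoment he0 he1), one_mulVec]
  calc ∑ a : Fin m → Bool, (∏ j, eOf (e j) (a j)) * ((phiVec m a ᵥ* TMat m e) ⬝ᵥ u) ^ 2
      = ∑ l, ∑ k, (∑ a : Fin m → Bool, (∏ j, eOf (e j) (a j)) * (phiVec m a l * phiVec m a k))
          * (v l * v k) := by
        simp_rw [← dotProduct_mulVec, sq, dotProduct, sum_mul_sum, mul_sum, sum_mul]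
        rw [sum_comm]
        refine sum_congr rfl fun l _ => ?_
        rw [sum_comm]
        exact sum_congr rfl fun k _ => sum_congr rfl fun a _ => by ring
    _ = v ⬝ᵥ (phiSecondMoment m e *ᵥ v) := by
        simp_rw [sum_prod_eOf_mul_phiVec_mul_phiVec, dotProduct, mulVec, dotProduct, mul_sum]
        exact sum_congr rfl fun l _ => sum_congr rfl fun k _ => by ring
    _ = u ⬝ᵥ v := by rw [hMv, dotProduct_comm]

lemma dotProduct_mulVec_eq_sum_sum {n : Type*} [Fintype n] (M : Matrix n n ℝ) (u : n → ℝ) :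
    u ⬝ᵥ (M *ᵥ u) = ∑ k, ∑ l, u k * M k l * u l := by
  simp only [dotProduct, mulVec, mul_sum, mul_assoc]

lemma drZ_eq_add_mul {m : ℕ} (Gx : Fin m → Option (Fin m) → ℝ) (y : Fin m → ℝ)
    (a pb : Fin m → Bool) (ev : Fin m → ℝ) :
    drZ m Gx y a pb ev
      = (∑ j, (1 / m : ℝ) * ∑ k, Gx j k * phiVec m pb k)
        + (∑ j, (1 / m : ℝ) * (y j - ∑ l, Gx j l * phiVec m a l))
          * ((phiVec m a ᵥ* TMat m ev) ⬝ᵥ phiVec m pb) := by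
  rw [drZ, sum_mul, ← sum_add_distrib]
  refine sum_congr rfl fun j _ => ?_
  simp only [add_mul, sum_add_distrib, mul_assoc, ← mul_sum, dotProduct, vecMul, mul_add]

@[fun_prop]
lemma measurable_phiVec_apply (m : ℕ) (l : Option (Fin m)) :
    Measurable fun a : Fin m → Bool => phiVec m a l :=
  measurable_of_countable _

@[fun_prop]
lemma measurable_TMat_apply (m : ℕ) (l k : Option (Fin m)) :
    Measurable fun e : Fin m → ℝ => TMat m e l k := by
  rcases l with _ | j <;> rcases k with _ | k <;> simp only [TMat, Matrix.of_apply]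
  all_goals (try split_ifs) <;> fun_prop

lemma Measurable.stronglyMeasurable_comap {Ω β : Type*} {mβ : MeasurableSpace β} {F : β → ℝ}
    (hF : Measurable F) (f : Ω → β) :
    StronglyMeasurable[mβ.comap f] fun ω => F (f ω) :=
  (hF.comp (comap_measurable f)).stronglyMeasurable

lemma abs_phiVec_le_one {m : ℕ} (a : Fin m → Bool) (l : Option (Fin m)) :
    |phiVec m a l| ≤ 1 := by
  rcases l with _ | j
  · simp [phiVec]
  · by_cases h : a j <;> simp [phiVec, h]

lemma memLp_sum_mul_phiVec {Ω 𝒳 : Type*} [MeasurableSpace Ω] [MeasurableSpace 𝒳]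
    {μ : Measure Ω} [IsFiniteMeasure μ] {m : ℕ} {X : Ω → 𝒳} (hX : Measurable X)
    {A : Ω → Fin m → Bool} (hA : Measurable A) {g : Option (Fin m) → 𝒳 → ℝ}
    (hg : ∀ l, Measurable (g l)) {C : ℝ} (hC : ∀ l x, |g l x| ≤ C) (p : ℝ≥0∞) :
    MemLp (fun ω => ∑ l, g l (X ω) * phiVec m (A ω) l) p μ :=
  memLp_finsetSum _ fun l _ => .of_bound (by fun_prop) C (.of_forall fun ω => by
    rw [Real.norm_eq_abs, abs_mul]
    exact (mul_le_of_le_one_right (abs_nonneg _) (abs_phiVec_le_one _ _)).trans (hC l _))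

section CondExp

variable {Ω : Type*} {m mΩ : MeasurableSpace Ω} {μ : Measure Ω} {f g : Ω → ℝ}

lemma integral_mul_eq_integral_mul_condExp (hm : m ≤ mΩ) [SigmaFinite (μ.trim hm)]
    (hf : StronglyMeasurable[m] f) (hfg : Integrable (f * g) μ) (hg : Integrable g μ) :
    ∫ ω, f ω * g ω ∂μ = ∫ ω, f ω * μ[g | m] ω ∂μ :=
  (integral_condExp hm).symm.trans
    (integral_congr_ae (condExp_mul_of_stronglyMeasurable_left hf hfg hg))

lemma integral_mul_of_condExp_eq_const (hm : m ≤ mΩ) [SigmaFinite (μ.trim hm)]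
    (hf : StronglyMeasurable[m] f) (hfg : Integrable (f * g) μ) (hg : Integrable g μ) {c : ℝ}
    (hc : μ[g | m] =ᵐ[μ] fun _ => c) :
    ∫ ω, f ω * g ω ∂μ = c * ∫ ω, f ω ∂μ :=
  calc ∫ ω, f ω * g ω ∂μ = ∫ ω, f ω * μ[g | m] ω ∂μ :=
        integral_mul_eq_integral_mul_condExp hm hf hfg hg
    _ = ∫ ω, f ω * c ∂μ := integral_congr_ae ((ae_eq_refl f).mul hc)
    _ = c * ∫ ω, f ω ∂μ := by rw [integral_mul_const, mul_comm]

lemma integrable_of_integrable_mul_of_condExp_eq_const {c : ℝ}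
    (hf : StronglyMeasurable[m] f) (hfg : Integrable (f * g) μ) (hg : Integrable g μ)
    (hc : μ[g | m] =ᵐ[μ] fun _ => c) (hc0 : c ≠ 0) : Integrable f μ := by
  have hfc : Integrable (f * fun _ => c) μ :=
    integrable_condExp.congr ((condExp_mul_of_stronglyMeasurable_left hf hfg hg).trans
      ((ae_eq_refl f).mul hc))
  exact (integrable_mul_const_iff (isUnit_iff_ne_zero.mpr hc0) f).mp hfc

lemma condExp_sum_mul_sub_eq_zero {ι : Type*} [Fintype ι] (hm : m ≤ mΩ)
    [SigmaFinite (μ.trim hm)] (c : ι → ℝ) {Y fit : ι → Ω → ℝ} (hY : ∀ i, Integrable (Y i) μ)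
    (hfit : ∀ i, StronglyMeasurable[m] (fit i)) (hfit_int : ∀ i, Integrable (fit i) μ)
    (hY_fit : ∀ i, μ[Y i | m] =ᵐ[μ] fit i) :
    μ[fun ω => ∑ i, c i * (Y i ω - fit i ω) | m] =ᵐ[μ] 0 := by
  have hres : ∀ i, μ[c i • (Y i - fit i) | m] =ᵐ[μ] 0 := fun i => by
    filter_upwards [condExp_smul (c i) (Y i - fit i) m, condExp_sub (hY i) (hfit_int i) m,
      hY_fit i] with ω h_smul h_sub h_Y
    rw [h_smul, Pi.smul_apply, h_sub, Pi.sub_apply, h_Y,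
      condExp_of_stronglyMeasurable hm (hfit i) (hfit_int i)]
    simp
  have hsum : (fun ω => ∑ i, c i * (Y i ω - fit i ω)) = ∑ i, c i • (Y i - fit i) := by
    ext ω; simp [Finset.sum_apply]
  rw [hsum]
  refine (condExp_finsetSum (fun i _ => ((hY i).sub (hfit_int i)).smul (c i)) m).trans ?_
  filter_upwards [ae_all_iff.mpr hres] with ω h
  simp [Finset.sum_apply, h]

lemma integral_comp_eq_integral_sum_mul_condExp {α : Type*} [Fintype α] [DecidableEq α]
    [MeasurableSpace α] [MeasurableSingletonClass α] [IsFiniteMeasure μ] (hm : m ≤ mΩ)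
    {A : Ω → α} (hA : Measurable A) {h : α → Ω → ℝ} (hh : ∀ a, StronglyMeasurable[m] (h a))
    (hint : Integrable (fun ω => h (A ω) ω) μ) {π : α → Ω → ℝ}
    (hπ : ∀ a, μ[fun ω => if A ω = a then 1 else 0 | m] =ᵐ[μ] π a) :
    ∫ ω, h (A ω) ω ∂μ = ∫ ω, ∑ a, π a ω * h a ω ∂μ := by
  set ind : α → Ω → ℝ := fun a ω => if A ω = a then 1 else 0
  have hind_meas : ∀ a, Measurable (ind a) := fun a =>
    Measurable.ite (hA (measurableSet_singleton a)) measurable_const measurable_const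
  have hind : ∀ a, Integrable (ind a) μ := fun a =>
    .of_bound (hind_meas a).aestronglyMeasurable 1 (.of_forall fun ω => by
      simp only [ind]; split_ifs <;> simp)
  have hterm : ∀ a, Integrable (h a * ind a) μ := fun a =>
    hint.norm.mono' (((hh a).mono hm).measurable.mul (hind_meas a)).aestronglyMeasurable
      (.of_forall fun ω => by
        simp only [ind, Pi.mul_apply]; split_ifs with hω <;> simp [hω])
  have hpull : ∀ a, μ[h a * ind a | m] =ᵐ[μ] h a * π a := fun a =>
    (condExp_mul_of_stronglyMeasurable_left (hh a) (hterm a) (hind a)).trans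
      ((ae_eq_refl (h a)).mul (hπ a))
  calc ∫ ω, h (A ω) ω ∂μ = ∫ ω, ∑ a, (h a * ind a) ω ∂μ := by
        simp [ind]
    _ = ∑ a, ∫ ω, (μ[h a * ind a | m]) ω ∂μ := by
        rw [integral_finsetSum _ fun a _ => hterm a]
        simp_rw [integral_condExp hm]
    _ = ∫ ω, ∑ a, π a ω * h a ω ∂μ := by
        rw [integral_finsetSum _ fun a _ => ?_]
        · refine sum_congr rfl fun a _ => (integral_congr_ae (hpull a)).trans ?_
          simp only [Pi.mul_apply, mul_comm]
        · exact (integrable_condExp.congr (hpull a)).congr (.of_forall fun ω => mul_comm _ _)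

lemma variance_add_mul_of_condExp_eq [IsProbabilityMeasure μ] (hm : m ≤ mΩ) {W U S : Ω → ℝ}
    {σ2 : ℝ} (hW : StronglyMeasurable[m] W) (hS : StronglyMeasurable[m] S)
    (hW2 : MemLp W 2 μ) (hU2 : MemLp U 2 μ) (hUS2 : MemLp (fun ω => U ω * S ω) 2 μ)
    (hU : μ[U | m] =ᵐ[μ] 0) (hU_sq : μ[fun ω => U ω ^ 2 | m] =ᵐ[μ] fun _ => σ2) :
    variance (fun ω => W ω + U ω * S ω) μ = variance W μ + σ2 * ∫ ω, S ω ^ 2 ∂μ := by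
  have hUS : Integrable (fun ω => U ω * S ω) μ := hUS2.integrable one_le_two
  have hWUS : Integrable (fun ω => W ω * (U ω * S ω)) μ := hW2.integrable_mul hUS2
  have hmean : ∫ ω, U ω * S ω ∂μ = 0 := by
    simp_rw [mul_comm (U _)]
    rw [integral_mul_of_condExp_eq_const (c := 0) hm hS
      (hUS.congr (.of_forall fun ω => mul_comm _ _)) (hU2.integrable one_le_two) hU, zero_mul]
  have hcross : ∫ ω, W ω * (U ω * S ω) ∂μ = 0 := by
    calc ∫ ω, W ω * (U ω * S ω) ∂μ = ∫ ω, (W * S) ω * U ω ∂μ :=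
          integral_congr_ae (.of_forall fun ω => by simp only [Pi.mul_apply]; ring)
      _ = 0 := by
          rw [integral_mul_of_condExp_eq_const (c := 0) hm (hW.mul hS)
            (hWUS.congr (.of_forall fun ω => by simp only [Pi.mul_apply]; ring))
            (hU2.integrable one_le_two) hU, zero_mul]
  have hsq : ∫ ω, (U ω * S ω) ^ 2 ∂μ = σ2 * ∫ ω, S ω ^ 2 ∂μ := by
    rw [← integral_mul_of_condExp_eq_const hm (f := fun ω => S ω ^ 2) (hS.pow 2)
      (hUS2.integrable_sq.congr (.of_forall fun ω => by simp only [Pi.mul_apply]; ring))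
      hU2.integrable_sq hU_sq]
    congr 1; ext ω; ring
  have hZ_sq : ∫ ω, (W ω + U ω * S ω) ^ 2 ∂μ
      = ∫ ω, W ω ^ 2 ∂μ + 2 * ∫ ω, W ω * (U ω * S ω) ∂μ + ∫ ω, (U ω * S ω) ^ 2 ∂μ := by
    have h12 : Integrable (fun ω => W ω ^ 2 + 2 * (W ω * (U ω * S ω))) μ :=
      hW2.integrable_sq.add (hWUS.const_mul 2)
    calc ∫ ω, (W ω + U ω * S ω) ^ 2 ∂μ
        = ∫ ω, (W ω ^ 2 + 2 * (W ω * (U ω * S ω)) + (U ω * S ω) ^ 2) ∂μ :=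
          integral_congr_ae (.of_forall fun ω => by ring)
      _ = _ := by
          rw [integral_add h12 hUS2.integrable_sq,
            integral_add hW2.integrable_sq (hWUS.const_mul 2), integral_const_mul]
  rw [variance_eq_sub (X := fun ω => W ω + U ω * S ω) (hW2.add hUS2), variance_eq_sub hW2]
  simp only [Pi.pow_apply]
  rw [integral_add (hW2.integrable one_le_two) hUS, hZ_sq, hmean, hcross, hsq]
  ring

end CondExp

lemma integral_sq_vecMul_TMat_dotProduct {Ω 𝒳 : Type*} [MeasurableSpace Ω] [MeasurableSpace 𝒳]
    {μ : Measure Ω} [IsFiniteMeasure μ] {m : ℕ} {X : Ω → 𝒳} (hX : Measurable X)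
    {A : Ω → Fin m → Bool} (hA : Measurable A) {e : Fin m → 𝒳 → ℝ}
    (he_meas : ∀ j, Measurable (e j)) (he0 : ∀ j x, e j x ≠ 0) (he1 : ∀ j x, 1 - e j x ≠ 0)
    (hfac : ∀ a : Fin m → Bool,
      μ[(fun ω => if A ω = a then (1 : ℝ) else 0) | MeasurableSpace.comap X inferInstance]
        =ᵐ[μ] fun ω => ∏ j : Fin m, eOf (e j (X ω)) (a j))
    {u : 𝒳 → Option (Fin m) → ℝ} (hu : ∀ k, Measurable fun x => u x k)
    (hint : Integrable (fun ω =>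
      ((phiVec m (A ω) ᵥ* TMat m (fun i => e i (X ω))) ⬝ᵥ u (X ω)) ^ 2) μ) :
    ∫ ω, ((phiVec m (A ω) ᵥ* TMat m (fun i => e i (X ω))) ⬝ᵥ u (X ω)) ^ 2 ∂μ
      = ∫ ω, u (X ω) ⬝ᵥ (TMat m (fun i => e i (X ω)) *ᵥ u (X ω)) ∂μ := by
  have hscore : ∀ a, Measurable fun x =>
      ((phiVec m a ᵥ* TMat m (fun i => e i x)) ⬝ᵥ u x) ^ 2 := by
    intro a
    simp only [dotProduct, vecMul]
    fun_prop
  rw [integral_comp_eq_integral_sum_mul_condExp hX.comap_le hA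
    (h := fun a ω => ((phiVec m a ᵥ* TMat m (fun i => e i (X ω))) ⬝ᵥ u (X ω)) ^ 2)
    (fun a => (hscore a).stronglyMeasurable_comap X) hint hfac]
  refine integral_congr_ae (.of_forall fun ω => ?_)
  exact sum_prod_eOf_mul_sq_vecMul_TMat_dotProduct (he0 · (X ω)) (he1 · (X ω)) (u (X ω))

theorem DR_variance_identity_general
    {Ω : Type*} [MeasurableSpace Ω]
    (μ : Measure Ω) [IsProbabilityMeasure μ]
    {𝒳 : Type*} [MeasurableSpace 𝒳]
    (m : ℕ)
    (X : Ω → 𝒳) (hX : Measurable X)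
    (A : Ω → Fin m → Bool) (hA : Measurable A)
    (Y : Ω → Fin m → ℝ)
    (hY2 : ∀ j, MemLp (fun ω => Y ω j) 2 μ)
    (e : Fin m → 𝒳 → ℝ) (he_meas : ∀ j, Measurable (e j))
    (he : ∀ j x, 0 < e j x ∧ e j x < 1)
    -- factored propensity score: P(A = a | X) = ∏_j P(A_j = a_j | X) = ∏_j e_j(X)(a_j)
    (hfac : ∀ a : Fin m → Bool,
      μ[(fun ω => if A ω = a then (1 : ℝ) else 0) | MeasurableSpace.comap X inferInstance]
        =ᵐ[μ] fun ω => ∏ j : Fin m, eOf (e j (X ω)) (a j))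
    -- additive outcome model, matrix form:  E[Y | A, X] = G(X) φ(A)
    (G : Fin m → Option (Fin m) → 𝒳 → ℝ)
    (hG_meas : ∀ j k, Measurable (G j k))
    (hG_bdd : ∃ C, ∀ j k x, |G j k x| ≤ C)
    (hadd : ∀ j : Fin m,
      μ[(fun ω => Y ω j) | MeasurableSpace.comap (fun ω => (A ω, X ω)) inferInstance]
        =ᵐ[μ] fun ω => ∑ l : Option (Fin m), G j l (X ω) * phiVec m (A ω) l)
    -- policy assignment
    (p : 𝒳 → Fin m → Bool) (hp : Measurable p)
    -- square-integrability of the relevant random variables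
    (hZ2 : MemLp (fun ω =>
        drZ m (fun j k => G j k (X ω)) (Y ω) (A ω) (p (X ω)) (fun i => e i (X ω))) 2 μ)
    (hW2 : MemLp (fun ω => ∑ j : Fin m, (1 / m : ℝ) *
        ∑ k : Option (Fin m), G j k (X ω) * phiVec m (p (X ω)) k) 2 μ)
    -- homoskedasticity:  E[(wᵀ(Y − G(X)φ(A)))² | A, X] = σ²  a.s.
    (σ2 : ℝ)
    (hhomo :
      μ[(fun ω => (∑ j : Fin m, (1 / m : ℝ) *
          (Y ω j - ∑ l : Option (Fin m), G j l (X ω) * phiVec m (A ω) l)) ^ 2)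
        | MeasurableSpace.comap (fun ω => (A ω, X ω)) inferInstance]
        =ᵐ[μ] fun _ => σ2) :
    variance (fun ω =>
        drZ m (fun j k => G j k (X ω)) (Y ω) (A ω) (p (X ω)) (fun i => e i (X ω))) μ
      = variance (fun ω => ∑ j : Fin m, (1 / m : ℝ) *
            ∑ k : Option (Fin m), G j k (X ω) * phiVec m (p (X ω)) k) μ
        + σ2 * ∫ ω, ∑ k : Option (Fin m), ∑ l : Option (Fin m),
            phiVec m (p (X ω)) k * TMat m (fun i => e i (X ω)) k l *
              phiVec m (p (X ω)) l ∂μ := by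
  have hmAX := (hA.prodMk hX).comap_le
  obtain ⟨C, hC⟩ := hG_bdd
  set W := fun ω => ∑ j : Fin m, (1 / m : ℝ) *
    ∑ k : Option (Fin m), G j k (X ω) * phiVec m (p (X ω)) k
  set fit := fun j ω => ∑ l : Option (Fin m), G j l (X ω) * phiVec m (A ω) l
  set U := fun ω => ∑ j : Fin m, (1 / m : ℝ) * (Y ω j - fit j ω)
  set S := fun ω => (phiVec m (A ω) ᵥ* TMat m (fun i => e i (X ω))) ⬝ᵥ phiVec m (p (X ω))
  have hZ : (fun ω => drZ m (fun j k => G j k (X ω)) (Y ω) (A ω) (p (X ω)) (fun i => e i (X ω)))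
      = fun ω => W ω + U ω * S ω := funext fun ω => drZ_eq_add_mul _ _ _ _ _
  have hW := Measurable.stronglyMeasurable_comap (F := fun q : (Fin m → Bool) × 𝒳 =>
    ∑ j : Fin m, (1 / m : ℝ) * ∑ k, G j k q.2 * phiVec m (p q.2) k) (by fun_prop)
    (fun ω => (A ω, X ω))
  have hS := Measurable.stronglyMeasurable_comap
    (F := fun q : (Fin m → Bool) × 𝒳 => (phiVec m q.1 ᵥ* TMat m (fun i => e i q.2)) ⬝ᵥ
      phiVec m (p q.2)) (by simp only [dotProduct, vecMul]; fun_prop) (fun ω => (A ω, X ω))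
  have hfit := fun j => Measurable.stronglyMeasurable_comap
    (F := fun q : (Fin m → Bool) × 𝒳 => ∑ l, G j l q.2 * phiVec m q.1 l) (by fun_prop)
    (fun ω => (A ω, X ω))
  have hfit2 : ∀ j, MemLp (fit j) 2 μ := fun j =>
    memLp_sum_mul_phiVec hX hA (hG_meas j) (hC j) 2
  have hU2 : MemLp U 2 μ := memLp_finsetSum _ fun j _ => ((hY2 j).sub (hfit2 j)).const_mul _
  have hU := condExp_sum_mul_sub_eq_zero hmAX (fun _ => (1 / m : ℝ)) (fit := fit)
    (fun j => (hY2 j).integrable one_le_two) hfit (fun j => (hfit2 j).integrable one_le_two) hadd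
  have hUS2 : MemLp (fun ω => U ω * S ω) 2 μ :=
    ((hZ ▸ hZ2).sub hW2).ae_eq (.of_forall fun ω => by simp)
  rw [hZ, variance_add_mul_of_condExp_eq (W := W) (U := U) (S := S) hmAX hW hS hW2 hU2 hUS2 hU
    hhomo]
  -- `∫ S²` is junk unless `S²` is integrable, which `E[U² S²] < ∞` gives only for `σ2 ≠ 0`.
  obtain rfl | hσ := eq_or_ne σ2 0
  · simp
  have hS2 : Integrable (fun ω => S ω ^ 2) μ :=
    integrable_of_integrable_mul_of_condExp_eq_const (f := fun ω => S ω ^ 2) (hS.pow 2)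
      (hUS2.integrable_sq.congr (.of_forall fun ω => by simp only [Pi.mul_apply]; ring))
      hU2.integrable_sq hhomo hσ
  rw [integral_sq_vecMul_TMat_dotProduct hX hA he_meas (fun j x => (he j x).1.ne')
    (fun j x => sub_ne_zero.mpr (he j x).2.ne') hfac (u := fun x => phiVec m (p x))
    (fun k => by fun_prop) hS2]
  simp_rw [dotProduct_mulVec_eq_sum_sum]

/-- **Variance identity for the doubly robust policy value score (proof of Theorem 2,
fixed cluster size).**  Under the cluster model with fixed cluster size `m`, the factored
propensity score assumption, the additive outcome model `E[Y | A, X] = G(X) φ(A)` a.s.,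
square-integrability of the relevant random variables, and homoskedasticity
`E[(wᵀ(Y − G(X)φ(A)))² | A, X] = σ²` a.s., the score
`Z = wᵀ[G(X) + (Y − G(X)φ(A))φ(A)ᵀ T(e(X))] φ(p(X))` satisfies
`Var(Z) = Var(wᵀ G(X) φ(p(X))) + σ² E[φ(p(X))ᵀ T(e(X)) φ(p(X))]`. -/
theorem DR_variance_identity
    {Ω : Type*} [MeasurableSpace Ω]
    (μ : Measure Ω) [IsProbabilityMeasure μ]
    {𝒳 : Type*} [MeasurableSpace 𝒳]
    (m : ℕ) (hm : 1 ≤ m)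
    (X : Ω → 𝒳) (hX : Measurable X)
    (A : Ω → Fin m → Bool) (hA : Measurable A)
    (Y : Ω → Fin m → ℝ) (hY : Measurable Y)
    (hYint : ∀ j, Integrable (fun ω => Y ω j) μ)
    (hY2 : ∀ j, MemLp (fun ω => Y ω j) 2 μ)
    (e : Fin m → 𝒳 → ℝ) (he_meas : ∀ j, Measurable (e j))
    (he : ∀ j x, 0 < e j x ∧ e j x < 1)
    -- factored propensity score: P(A = a | X) = ∏_j P(A_j = a_j | X) = ∏_j e_j(X)(a_j)
    (hfac : ∀ a : Fin m → Bool,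
      μ[(fun ω => if A ω = a then (1 : ℝ) else 0) | MeasurableSpace.comap X inferInstance]
        =ᵐ[μ] fun ω => ∏ j : Fin m, eOf (e j (X ω)) (a j))
    -- additive outcome model, matrix form:  E[Y | A, X] = G(X) φ(A)
    (G : Fin m → Option (Fin m) → 𝒳 → ℝ)
    (hG_meas : ∀ j k, Measurable (G j k))
    (hG_bdd : ∃ C, ∀ j k x, |G j k x| ≤ C)
    (hadd : ∀ j : Fin m,
      μ[(fun ω => Y ω j) | MeasurableSpace.comap (fun ω => (A ω, X ω)) inferInstance]
        =ᵐ[μ] fun ω => ∑ l : Option (Fin m), G j l (X ω) * phiVec m (A ω) l)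
    -- policy assignment
    (p : 𝒳 → Fin m → Bool) (hp : Measurable p)
    -- square-integrability of the relevant random variables
    (hZ2 : MemLp (fun ω =>
        drZ m (fun j k => G j k (X ω)) (Y ω) (A ω) (p (X ω)) (fun i => e i (X ω))) 2 μ)
    (hW2 : MemLp (fun ω => ∑ j : Fin m, (1 / m : ℝ) *
        ∑ k : Option (Fin m), G j k (X ω) * phiVec m (p (X ω)) k) 2 μ)
    (hQint : Integrable (fun ω => ∑ k : Option (Fin m), ∑ l : Option (Fin m),
        phiVec m (p (X ω)) k * TMat m (fun i => e i (X ω)) k l * phiVec m (p (X ω)) l) μ)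
    -- homoskedasticity:  E[(wᵀ(Y − G(X)φ(A)))² | A, X] = σ²  a.s.
    (σ2 : ℝ) (hσ2 : 0 ≤ σ2)
    (hhomo :
      μ[(fun ω => (∑ j : Fin m, (1 / m : ℝ) *
          (Y ω j - ∑ l : Option (Fin m), G j l (X ω) * phiVec m (A ω) l)) ^ 2)
        | MeasurableSpace.comap (fun ω => (A ω, X ω)) inferInstance]
        =ᵐ[μ] fun _ => σ2) :
    variance (fun ω =>
        drZ m (fun j k => G j k (X ω)) (Y ω) (A ω) (p (X ω)) (fun i => e i (X ω))) μ
      = variance (fun ω => ∑ j : Fin m, (1 / m : ℝ) *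
            ∑ k : Option (Fin m), G j k (X ω) * phiVec m (p (X ω)) k) μ
        + σ2 * ∫ ω, ∑ k : Option (Fin m), ∑ l : Option (Fin m),
            phiVec m (p (X ω)) k * TMat m (fun i => e i (X ω)) k l *
              phiVec m (p (X ω)) l ∂μ :=
  DR_variance_identity_general μ m X hX A hA Y hY2 e he_meas he hfac G hG_meas hG_bdd hadd p hp hZ2
    hW2 σ2 hhomo
end
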